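/- Assume the path category C_Q of a quiver Q has a strict monoidal structure making the vertex set Q_0 a group. Then the path length is additive with respect to the monoidal product: ℓ(f · g) = ℓ(f) + ℓ(g) for all paths f, g. -/
import Mathlib


open scoped Classical TensorProduct

/-- The data of a (small, strict) category: objects `O`, morphisms `M`,
source and target maps, identities, and a (guarded) composition.
`comp a b` is the composite `a ∘ b` (first `b`, then `a`); its value is
only relevant when `src a = tgt b`. -/
structure CatStruct (O : Type) (M : Type) where
  src : M → O
  tgt : M → O
  id : O → M
  comp : M → M → M

namespace CatStruct

variable {O M : Type}

/-- The axioms making a `CatStruct` an honest category. -/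
structure IsCat (C : CatStruct O M) : Prop where
  src_id : ∀ x, C.src (C.id x) = x
  tgt_id : ∀ x, C.tgt (C.id x) = x
  src_comp : ∀ a b, C.src a = C.tgt b → C.src (C.comp a b) = C.src b
  tgt_comp : ∀ a b, C.src a = C.tgt b → C.tgt (C.comp a b) = C.tgt a
  id_comp : ∀ f, C.comp (C.id (C.tgt f)) f = f
  comp_id : ∀ f, C.comp f (C.id (C.src f)) = f
  assoc : ∀ a b c, C.src a = C.tgt b → C.src b = C.tgt c →
    C.comp (C.comp a b) c = C.comp a (C.comp b c)

/-- `f` is an identity morphism. -/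
def IsId (C : CatStruct O M) (f : M) : Prop := ∃ x, f = C.id x

/-- The set of 2-decompositions `(a, b)` with `a ∘ b = f`. -/
def N2 (C : CatStruct O M) (f : M) : Set (M × M) :=
  {p | C.src p.1 = C.tgt p.2 ∧ C.comp p.1 p.2 = f}

/-- `ComposesTo C [a₁, …, aₙ] f` means the `aᵢ` are composable and
`a₁ ∘ ⋯ ∘ aₙ = f`. -/
inductive ComposesTo (C : CatStruct O M) : List M → M → Prop
  | single (f : M) : ComposesTo C [f] f
  | cons (a : M) {l : List M} {f : M} (h : ComposesTo C l f)
      (hc : C.src a = C.tgt f) : ComposesTo C (a :: l) (C.comp a f)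

/-- A list of morphisms is nondegenerate if it contains no identities. -/
def NonDeg (C : CatStruct O M) (l : List M) : Prop := ∀ a ∈ l, ¬ C.IsId a

/-- Locally finite: every morphism has finitely many 2-decompositions. -/
def LocallyFinite (C : CatStruct O M) : Prop := ∀ f, (C.N2 f).Finite

/-- Möbius: every morphism has, in total over all lengths, finitely many
nondegenerate decompositions. -/
def Mobius (C : CatStruct O M) : Prop :=
  ∀ f, {l : List M | C.ComposesTo l f ∧ C.NonDeg l}.Finite

/-- `f` has finite length: there is a bound on the lengths of its
nondegenerate decompositions. -/
def FiniteLength (C : CatStruct O M) (f : M) : Prop :=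
  ∃ n, ∀ l, C.ComposesTo l f → C.NonDeg l → l.length ≤ n

end CatStruct

/-- The data of a strict monoidal category: a category together with a
monoidal product on objects and on morphisms and a unit object. -/
structure MonCatStruct (O : Type) (M : Type) extends CatStruct O M where
  objMul : O → O → O
  one : O
  mul : M → M → M

namespace MonCatStruct

variable {O M : Type}

/-- The axioms of a strict monoidal category. -/
structure IsMonCat (C : MonCatStruct O M) : Prop where
  toIsCat : C.toCatStruct.IsCat
  src_mul : ∀ a b, C.src (C.mul a b) = C.objMul (C.src a) (C.src b)
  tgt_mul : ∀ a b, C.tgt (C.mul a b) = C.objMul (C.tgt a) (C.tgt b)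
  id_mul : ∀ x y, C.mul (C.id x) (C.id y) = C.id (C.objMul x y)
  mul_assoc : ∀ a b c, C.mul (C.mul a b) c = C.mul a (C.mul b c)
  one_mul : ∀ f, C.mul (C.id C.one) f = f
  mul_one : ∀ f, C.mul f (C.id C.one) = f
  objMul_assoc : ∀ x y z, C.objMul (C.objMul x y) z = C.objMul x (C.objMul y z)
  objOne_mul : ∀ x, C.objMul C.one x = x
  objMul_one : ∀ x, C.objMul x C.one = x
  interchange : ∀ a b c d, C.src a = C.tgt b → C.src c = C.tgt d →
    C.mul (C.comp a b) (C.comp c d) = C.comp (C.mul a c) (C.mul b d)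

/-- The monoidal product has the unique lifting of factorisations (ULF)
property: for all morphisms `f, g` the induced map
`N₂(f) × N₂(g) → N₂(f·g)` is a bijection. -/
def MulULF (C : MonCatStruct O M) : Prop :=
  ∀ f g, Set.BijOn
    (fun pq : (M × M) × (M × M) => (C.mul pq.1.1 pq.2.1, C.mul pq.1.2 pq.2.2))
    (C.toCatStruct.N2 f ×ˢ C.toCatStruct.N2 g)
    (C.toCatStruct.N2 (C.mul f g))

/-- The monoid of objects is a group. -/
def ObjGroup (C : MonCatStruct O M) : Prop :=
  ∀ x, ∃ y, C.objMul x y = C.one ∧ C.objMul y x = C.one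

/-- A strict 2-group: a strict monoidal groupoid all of whose objects are
invertible with respect to the monoidal product. -/
def TwoGroup (C : MonCatStruct O M) : Prop :=
  C.IsMonCat ∧
  (∀ f, ∃ g, C.src g = C.tgt f ∧ C.tgt g = C.src f ∧
    C.comp f g = C.id (C.tgt f) ∧ C.comp g f = C.id (C.src f)) ∧
  C.ObjGroup

end MonCatStruct

/-- `C` is the path category of a quiver with arrow set `A`: every
non-identity morphism decomposes uniquely as a composite of arrows, and no
identity is a composite of arrows. -/
structure IsPathCat {O M : Type} (C : CatStruct O M) (A : Set M) : Prop where
  arrow_decomp : ∀ f, ¬ C.IsId f →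
    ∃! l : List M, (∀ a ∈ l, a ∈ A) ∧ C.ComposesTo l f
  id_no_decomp : ∀ f, C.IsId f →
    ¬ ∃ l : List M, (∀ a ∈ l, a ∈ A) ∧ C.ComposesTo l f

/-- `f` has length `n`: either `f` is an identity and `n = 0`, or `f` is a
composite of exactly `n` arrows from `A`. -/
def HasLen {O M : Type} (C : CatStruct O M) (A : Set M) (f : M) (n : ℕ) :
    Prop :=
  (C.IsId f ∧ n = 0) ∨
    ∃ l : List M, (∀ a ∈ l, a ∈ A) ∧ C.ComposesTo l f ∧ l.length = n

namespace CatStruct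

variable {O M : Type} {C : CatStruct O M}

lemma ComposesTo.ne_nil {l : List M} {f : M} (h : C.ComposesTo l f) : l ≠ [] := by
  cases h <;> simp

lemma ComposesTo.eq_of_singleton {b f : M} (h : C.ComposesTo [b] f) : f = b := by
  cases h with
  | single => rfl
  | cons a h hc => exact absurd rfl h.ne_nil

lemma ComposesTo.append_comp (hC : C.IsCat) {l l' : List M} {u v : M}
    (hu : C.ComposesTo l u) (hv : C.ComposesTo l' v) :
    C.src u = C.tgt v → C.ComposesTo (l ++ l') (C.comp u v) := by
  induction hu with
  | single f => exact fun h => hv.cons f h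
  | @cons a l0 f0 h0 hc ih =>
      intro h
      have hs : C.src f0 = C.tgt v := by
        rw [← hC.src_comp a f0 hc]; exact h
      rw [List.cons_append, hC.assoc a f0 v hc hs]
      exact (ih hs).cons a (by rw [hC.tgt_comp f0 v hs]; exact hc)

lemma ComposesTo.map_fun (φ : M → M)
    (hst : ∀ a b, C.src a = C.tgt b → C.src (φ a) = C.tgt (φ b))
    (hcomp : ∀ a b, C.src a = C.tgt b → φ (C.comp a b) = C.comp (φ a) (φ b))
    {l : List M} {f : M} (h : C.ComposesTo l f) :
    C.ComposesTo (l.map φ) (φ f) := by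
  induction h with
  | single f => exact .single _
  | @cons a l0 f0 h0 hc ih =>
      rw [List.map_cons, hcomp a f0 hc]
      exact ih.cons _ (hst a f0 hc)

end CatStruct

section ArrowLemmas

variable {O M : Type} {C : CatStruct O M} {A : Set M}

lemma arrow_not_isId (hP : IsPathCat C A) {a : M} (ha : a ∈ A) : ¬ C.IsId a := by
  intro hid
  exact hP.id_no_decomp a hid ⟨[a], by simpa using ha, .single a⟩

lemma arrow_indec (hC : C.IsCat) (hP : IsPathCat C A) {a : M} (ha : a ∈ A)
    {u v : M} (huv : C.src u = C.tgt v) (hcomp : C.comp u v = a) :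
    C.IsId u ∨ C.IsId v := by
  by_contra hcon
  push_neg at hcon
  obtain ⟨lu, ⟨hluA, hluC⟩, -⟩ := hP.arrow_decomp u hcon.1
  obtain ⟨lv, ⟨hlvA, hlvC⟩, -⟩ := hP.arrow_decomp v hcon.2
  have hcat : C.ComposesTo (lu ++ lv) a := by
    rw [← hcomp]; exact hluC.append_comp hC hlvC huv
  obtain ⟨l, -, hun⟩ := hP.arrow_decomp a (arrow_not_isId hP ha)
  have h1 : lu ++ lv = l := hun _ ⟨by
    intro x hx
    rcases List.mem_append.mp hx with h | h
    · exact hluA x h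
    · exact hlvA x h, hcat⟩
  have h2 : [a] = l := hun _ ⟨by simpa using ha, .single a⟩
  have := congrArg List.length (h1.trans h2.symm)
  simp at this
  have h3 := hluC.ne_nil
  have h4 := hlvC.ne_nil
  rcases lu with _ | ⟨x, lu⟩
  · exact h3 rfl
  · rcases lv with _ | ⟨y, lv⟩
    · exact h4 rfl
    · simp at this; omega

lemma arrow_of_indec (hP : IsPathCat C A) {f : M} (hne : ¬ C.IsId f)
    (hind : ∀ u v, C.src u = C.tgt v → C.comp u v = f → C.IsId u ∨ C.IsId v) :
    f ∈ A := by
  obtain ⟨l, ⟨hlA, hlC⟩, -⟩ := hP.arrow_decomp f hne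
  cases hlC with
  | single => exact hlA f (by simp)
  | @cons a l0 f0 h0 hc =>
      exfalso
      have ha : a ∈ A := hlA a (by simp)
      have hf0 : ¬ C.IsId f0 := by
        intro hid
        exact hP.id_no_decomp f0 hid ⟨l0, fun x hx => hlA x (by simp [hx]), h0⟩
      rcases hind a f0 hc rfl with h | h
      · exact arrow_not_isId hP ha h
      · exact hf0 h

lemma arrow_map (hC : C.IsCat) (hP : IsPathCat C A) (φ φ' : M → M)
    (hst' : ∀ u v, C.src u = C.tgt v → C.src (φ' u) = C.tgt (φ' v))
    (hcomp' : ∀ u v, C.src u = C.tgt v → φ' (C.comp u v) = C.comp (φ' u) (φ' v))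
    (hid : ∀ x, C.IsId (φ (C.id x)))
    (hid' : ∀ x, C.IsId (φ' (C.id x)))
    (hinv : ∀ a, φ (φ' a) = a) (hinv' : ∀ a, φ' (φ a) = a)
    {a : M} (ha : a ∈ A) : φ a ∈ A := by
  apply arrow_of_indec hP
  · rintro ⟨y, hy⟩
    apply arrow_not_isId hP ha
    obtain ⟨z, hz⟩ := hid' y
    exact ⟨z, by rw [← hinv' a, hy, hz]⟩
  · intro u v huv hcuv
    have hdec : a = C.comp (φ' u) (φ' v) := by
      rw [← hinv' a, ← hcuv, hcomp' u v huv]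
    rcases arrow_indec hC hP ha (hst' u v huv) hdec.symm with ⟨x, hx⟩ | ⟨x, hx⟩
    · left
      obtain ⟨z, hz⟩ := hid x
      exact ⟨z, by rw [← hinv u, hx, hz]⟩
    · right
      obtain ⟨z, hz⟩ := hid x
      exact ⟨z, by rw [← hinv v, hx, hz]⟩

end ArrowLemmas

section MonLemmas

variable {O M : Type} {C : MonCatStruct O M}

lemma comp_id_id (hC : C.IsMonCat) (x : O) :
    C.comp (C.id x) (C.id x) = C.id x := by
  have := hC.toIsCat.id_comp (C.id x)
  rwa [hC.toIsCat.tgt_id] at this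

/-- Tensoring on the right with an identity preserves src/tgt compatibility. -/
lemma mulRight_st (hC : C.IsMonCat) (x : O) :
    ∀ u v, C.src u = C.tgt v →
      C.src (C.mul u (C.id x)) = C.tgt (C.mul v (C.id x)) := by
  intro u v h
  rw [hC.src_mul, hC.tgt_mul, h, hC.toIsCat.src_id, hC.toIsCat.tgt_id]

lemma mulRight_comp (hC : C.IsMonCat) (x : O) :
    ∀ u v, C.src u = C.tgt v →
      C.mul (C.comp u v) (C.id x) = C.comp (C.mul u (C.id x)) (C.mul v (C.id x)) := by
  intro u v h
  conv_lhs => rw [← comp_id_id hC x]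
  exact hC.interchange u v _ _ h (by rw [hC.toIsCat.src_id, hC.toIsCat.tgt_id])

lemma mulRight_inv (hC : C.IsMonCat) {x y : O} (hxy : C.objMul x y = C.one) (a : M) :
    C.mul (C.mul a (C.id x)) (C.id y) = a := by
  rw [hC.mul_assoc, hC.id_mul, hxy, hC.mul_one]

lemma mulRight_arrow (hC : C.IsMonCat) {A : Set M} (hP : IsPathCat C.toCatStruct A)
    {x y : O} (hxy : C.objMul x y = C.one) (hyx : C.objMul y x = C.one)
    {a : M} (ha : a ∈ A) : C.mul a (C.id x) ∈ A := by
  refine arrow_map hC.toIsCat hP (fun a => C.mul a (C.id x)) (fun a => C.mul a (C.id y))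
    (mulRight_st hC y) (mulRight_comp hC y) (fun z => ⟨_, hC.id_mul z x⟩)
    (fun z => ⟨_, hC.id_mul z y⟩) (fun a => mulRight_inv hC hyx a)
    (fun a => mulRight_inv hC hxy a) ha

lemma mulLeft_st (hC : C.IsMonCat) (x : O) :
    ∀ u v, C.src u = C.tgt v →
      C.src (C.mul (C.id x) u) = C.tgt (C.mul (C.id x) v) := by
  intro u v h
  rw [hC.src_mul, hC.tgt_mul, h, hC.toIsCat.src_id, hC.toIsCat.tgt_id]

lemma mulLeft_comp (hC : C.IsMonCat) (x : O) :
    ∀ u v, C.src u = C.tgt v →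
      C.mul (C.id x) (C.comp u v) = C.comp (C.mul (C.id x) u) (C.mul (C.id x) v) := by
  intro u v h
  conv_lhs => rw [← comp_id_id hC x]
  exact hC.interchange _ _ u v (by rw [hC.toIsCat.src_id, hC.toIsCat.tgt_id]) h

lemma mulLeft_inv (hC : C.IsMonCat) {x y : O} (hxy : C.objMul x y = C.one) (a : M) :
    C.mul (C.id x) (C.mul (C.id y) a) = a := by
  rw [← hC.mul_assoc, hC.id_mul, hxy, hC.one_mul]

lemma mulLeft_arrow (hC : C.IsMonCat) {A : Set M} (hP : IsPathCat C.toCatStruct A)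
    {x y : O} (hxy : C.objMul x y = C.one) (hyx : C.objMul y x = C.one)
    {a : M} (ha : a ∈ A) : C.mul (C.id x) a ∈ A := by
  refine arrow_map hC.toIsCat hP (fun a => C.mul (C.id x) a) (fun a => C.mul (C.id y) a)
    (mulLeft_st hC y) (mulLeft_comp hC y) (fun z => ⟨_, hC.id_mul x z⟩)
    (fun z => ⟨_, hC.id_mul y z⟩) (fun a => mulLeft_inv hC hxy a)
    (fun a => mulLeft_inv hC hyx a) ha

end MonLemmas

/-- In a strict monoidal path category whose vertices form a
group, the path length is additive for the monoidal product:
`ℓ(f · g) = ℓ(f) + ℓ(g)`. -/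
theorem pathCat_length_additive {O M : Type}
    (C : MonCatStruct O M) (hC : C.IsMonCat) (A : Set M)
    (hP : IsPathCat C.toCatStruct A) (hG : C.ObjGroup) :
    ∀ (f g : M) (m n : ℕ), HasLen C.toCatStruct A f m →
      HasLen C.toCatStruct A g n →
      HasLen C.toCatStruct A (C.mul f g) (m + n) := by
  intro f g m n hf hg
  rcases hf with ⟨⟨u, hu⟩, hm⟩ | ⟨lf, hlfA, hlfC, hlf⟩
  · rcases hg with ⟨⟨v, hv⟩, hn⟩ | ⟨lg, hlgA, hlgC, hlg⟩
    · -- both identities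
      left
      exact ⟨⟨C.objMul u v, by rw [hu, hv, hC.id_mul]⟩, by omega⟩
    · -- f identity, g a path
      right
      obtain ⟨u', huu', hu'u⟩ := hG u
      refine ⟨lg.map (fun a => C.mul (C.id u) a), ?_, ?_, by simp; omega⟩
      · intro a haa
        obtain ⟨b, hb, rfl⟩ := List.mem_map.mp haa
        exact mulLeft_arrow hC hP huu' hu'u (hlgA b hb)
      · rw [hu]
        exact hlgC.map_fun _ (mulLeft_st hC u) (mulLeft_comp hC u)
  · rcases hg with ⟨⟨v, hv⟩, hn⟩ | ⟨lg, hlgA, hlgC, hlg⟩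
    · -- g identity, f a path
      right
      obtain ⟨v', hvv', hv'v⟩ := hG v
      refine ⟨lf.map (fun a => C.mul a (C.id v)), ?_, ?_, by simp; omega⟩
      · intro a haa
        obtain ⟨b, hb, rfl⟩ := List.mem_map.mp haa
        exact mulRight_arrow hC hP hvv' hv'v (hlfA b hb)
      · rw [hv]
        exact hlfC.map_fun _ (mulRight_st hC v) (mulRight_comp hC v)
    · -- both paths
      right
      obtain ⟨u', huu', hu'u⟩ := hG (C.tgt g)
      obtain ⟨v', hvv', hv'v⟩ := hG (C.src f)
      have key : C.mul f g =
          C.comp (C.mul f (C.id (C.tgt g))) (C.mul (C.id (C.src f)) g) := by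
        have := hC.interchange f (C.id (C.src f)) (C.id (C.tgt g)) g
          (by rw [hC.toIsCat.tgt_id]) (by rw [hC.toIsCat.src_id])
        rwa [hC.toIsCat.comp_id, hC.toIsCat.id_comp] at this
      refine ⟨lf.map (fun a => C.mul a (C.id (C.tgt g))) ++
        lg.map (fun a => C.mul (C.id (C.src f)) a), ?_, ?_, by simp; omega⟩
      · intro a haa
        rcases List.mem_append.mp haa with h | h
        · obtain ⟨b, hb, rfl⟩ := List.mem_map.mp h
          exact mulRight_arrow hC hP huu' hu'u (hlfA b hb)
        · obtain ⟨b, hb, rfl⟩ := List.mem_map.mp h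
          exact mulLeft_arrow hC hP hvv' hv'v (hlgA b hb)
      · rw [key]
        refine CatStruct.ComposesTo.append_comp hC.toIsCat
          (hlfC.map_fun _ (mulRight_st hC (C.tgt g)) (mulRight_comp hC (C.tgt g)))
          (hlgC.map_fun _ (mulLeft_st hC (C.src f)) (mulLeft_comp hC (C.src f))) ?_
        rw [hC.src_mul, hC.tgt_mul, hC.toIsCat.src_id, hC.toIsCat.tgt_id]
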